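/- Tandem glue allocation: let 𝒯 be a directed RTAS of width w and height h that uniquely self-assembles a pattern P with coloring function f, and let g, b, o be colors with b ≠ o such that T contains exactly one tile type t_g of color g, exactly one tile type t_b of color b, and exactly one tile type t_o of color o. Suppose (i) there are positions (x₁, y₁), (x₂, y₂) with 1 ≤ xᵢ ≤ w−1 and 1 ≤ yᵢ ≤ h such that P(x₁, y₁) = g, P(x₁+1, y₁) = b, P(x₂, y₂) = g, and P(x₂+1, y₂) = o, and (ii) there are positions (x₃, y₃), (x₄, y₄) with 1 ≤ xᵢ ≤ w and 1 ≤ yᵢ ≤ h−1 such that P(x₃, y₃) = P(x₃, y₃+1) = b and P(x₄, y₄) = P(x₄, y₄+1) = o. Then t_g(E) = t_b(W) = t_o(W), t_b(N) = t_b(S), t_o(N) = t_o(S), and t_b(S) ≠ t_o(S). -/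
import Mathlib


/-- A tile type: a quadruple of glue labels (strings). -/
structure TileType where
  north : String
  west : String
  south : String
  east : String
deriving DecidableEq

/-- An assembly: a partial function from ℤ² to tile types. -/
abbrev Assembly := ℤ × ℤ → Option TileType

/-- A rectilinear tile assembly system (RTAS) of width `w ≥ 1` and height `h ≥ 1`:
a finite set `T` of tile types, together with an L-shaped seed assembly `σ` whose
domain is `{(x,0) : 0 ≤ x ≤ w} ∪ {(0,y) : 0 ≤ y ≤ h}` and which uses tile types
not in `T`. (All glues have strength 1 and the temperature is 2; this is encoded
in the attachment rule below.) -/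
structure RTAS where
  w : ℕ
  h : ℕ
  hw : 1 ≤ w
  hh : 1 ≤ h
  T : Finset TileType
  σ : Assembly
  seed_dom : ∀ p : ℤ × ℤ, (σ p).isSome ↔
      (0 ≤ p.1 ∧ p.1 ≤ (w : ℤ) ∧ p.2 = 0) ∨ (p.1 = 0 ∧ 0 ≤ p.2 ∧ p.2 ≤ (h : ℤ))
  seed_not_in_T : ∀ p t, σ p = some t → t ∉ T

namespace RTAS

/-- A tile of type `t ∈ T` may attach to assembly `α` at position `p ∉ dom α`:
both the west neighbor and the south neighbor lie in `dom α`, the east glue of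
the west neighbor equals `t.west`, and the north glue of the south neighbor
equals `t.south` (cooperation of two strength-1 glues at temperature 2). -/
def Attaches (S : RTAS) (α : Assembly) (p : ℤ × ℤ) (t : TileType) : Prop :=
  t ∈ S.T ∧ α p = none ∧
    ∃ tw ts : TileType,
      α (p.1 - 1, p.2) = some tw ∧ α (p.1, p.2 - 1) = some ts ∧
      tw.east = t.west ∧ ts.north = t.south

/-- One-step growth: `β` is obtained from `α` by a single tile attachment. -/
def Step (S : RTAS) (α β : Assembly) : Prop :=
  ∃ p t, S.Attaches α p t ∧ β = Function.update α p (some t)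

/-- An assembly is producible if it is obtained from the seed `σ` by a finite
sequence of single-tile attachments. -/
def Producible (S : RTAS) (α : Assembly) : Prop :=
  Relation.ReflTransGen S.Step S.σ α

/-- A producible assembly is terminal if no tile can attach to it. -/
def Terminal (S : RTAS) (α : Assembly) : Prop :=
  S.Producible α ∧ ∀ p t, ¬ S.Attaches α p t

/-- The RTAS is directed if any two producible assemblies have a common
producible extension. -/
def IsDirected (S : RTAS) : Prop :=
  ∀ α β, S.Producible α → S.Producible β →
    ∃ γ, Relation.ReflTransGen S.Step α γ ∧ Relation.ReflTransGen S.Step β γ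

/-- Every tile type of `T` appears in some producible assembly. -/
def UsesAllTiles (S : RTAS) : Prop :=
  ∀ t ∈ S.T, ∃ (α : Assembly) (p : ℤ × ℤ), S.Producible α ∧ α p = some t

/-- The domain `{0,…,w} × {0,…,h}` of a pattern of width `w` and height `h`. -/
def PatternDom (w h : ℕ) : Set (ℤ × ℤ) :=
  {p | 0 ≤ p.1 ∧ p.1 ≤ (w : ℤ) ∧ 0 ≤ p.2 ∧ p.2 ≤ (h : ℤ)}

/-- `S` uniquely self-assembles the pattern `P` (of width `S.w` and height `S.h`)
with coloring function `f`: every terminal producible assembly `α` has domain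
`dom P` and satisfies `f (α p) = P p` on it. -/
def UniquelySelfAssembles (S : RTAS) (P : ℤ × ℤ → ℕ) (f : TileType → ℕ) : Prop :=
  ∀ α, S.Terminal α →
    (∀ p : ℤ × ℤ, (α p).isSome ↔ p ∈ PatternDom S.w S.h) ∧
    (∀ p t, α p = some t → f t = P p)

end RTAS

namespace RTAS

lemma step_mono {S : RTAS} {α β : Assembly} (h : S.Step α β) {p : ℤ × ℤ} {t : TileType}
    (hp : α p = some t) : β p = some t := by
  obtain ⟨q, u, ⟨_, hnone, _⟩, rfl⟩ := h
  rcases eq_or_ne p q with rfl | hne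
  · rw [hp] at hnone; exact absurd hnone (by simp)
  · rw [Function.update_of_ne hne]; exact hp

lemma rt_mono {S : RTAS} {α β : Assembly} (h : Relation.ReflTransGen S.Step α β)
    {p : ℤ × ℤ} {t : TileType} (hp : α p = some t) : β p = some t := by
  induction h with
  | refl => exact hp
  | tail _ hstep ih => exact step_mono hstep ih

lemma placed {S : RTAS} {α : Assembly} (h : S.Producible α) {p : ℤ × ℤ} {t : TileType}
    (hp : α p = some t) :
    S.σ p = some t ∨ ∃ α', S.Producible α' ∧ S.Attaches α' p t ∧
      Relation.ReflTransGen S.Step (Function.update α' p (some t)) α := by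
  induction h with
  | refl => exact Or.inl hp
  | @tail β γ hchain hstep ih =>
    obtain ⟨q, u, hatt, rfl⟩ := hstep
    rcases eq_or_ne p q with rfl | hne
    · right
      have hu : u = t := by simpa using hp
      subst hu
      exact ⟨β, hchain, hatt, Relation.ReflTransGen.refl⟩
    · rw [Function.update_of_ne hne] at hp
      rcases ih hp with h1 | ⟨α', h2, h3, h4⟩
      · exact Or.inl h1
      · exact Or.inr ⟨α', h2, h3, h4.tail ⟨q, u, hatt, rfl⟩⟩

lemma dom_mem {S : RTAS} {α : Assembly} (h : S.Producible α) :
    ∀ p t, α p = some t → p ∈ PatternDom S.w S.h := by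
  induction h with
  | refl =>
    intro p t hp
    have hs := (S.seed_dom p).mp (by rw [hp]; rfl)
    have hw : (0:ℤ) ≤ (S.w : ℤ) := by positivity
    have hh : (0:ℤ) ≤ (S.h : ℤ) := by positivity
    rcases hs with ⟨h1, h2, h3⟩ | ⟨h1, h2, h3⟩
    · exact ⟨h1, h2, by omega, by omega⟩
    · exact ⟨by omega, by omega, h2, h3⟩
  | @tail β γ hchain hstep ih =>
    obtain ⟨q, u, ⟨_, _, tw, ts, hW, hS, _, _⟩, rfl⟩ := hstep
    intro p t hp
    rcases eq_or_ne p q with rfl | hne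
    · obtain ⟨a1, a2, a3, a4⟩ := ih _ _ hW
      obtain ⟨b1, b2, b3, b4⟩ := ih _ _ hS
      simp only [PatternDom, Set.mem_setOf_eq] at *
      exact ⟨by omega, by omega, by omega, by omega⟩
    · rw [Function.update_of_ne hne] at hp; exact ih _ _ hp

lemma terminal_absorb {S : RTAS} {α γ : Assembly} (hterm : S.Terminal α)
    (h : Relation.ReflTransGen S.Step α γ) : γ = α := by
  rcases h.cases_head with rfl | ⟨β, hstep, _⟩
  · rfl
  · obtain ⟨p, t, hatt, _⟩ := hstep
    exact absurd hatt (hterm.2 p t)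

lemma exists_terminal (S : RTAS) : ∃ α, S.Terminal α := by
  classical
  set D : Finset (ℤ × ℤ) := Finset.Icc (0:ℤ) (S.w : ℤ) ×ˢ Finset.Icc (0:ℤ) (S.h : ℤ) with hD
  have hmemD : ∀ p : ℤ × ℤ, p ∈ PatternDom S.w S.h → p ∈ D := by
    intro p hp
    obtain ⟨h1, h2, h3, h4⟩ := hp
    simp only [hD, Finset.mem_product, Finset.mem_Icc]
    exact ⟨⟨h1, h2⟩, h3, h4⟩
  suffices H : ∀ n (α : Assembly), S.Producible α →
      (D.filter (fun p => α p = none)).card ≤ n → ∃ β, S.Terminal β from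
    H _ S.σ Relation.ReflTransGen.refl le_rfl
  intro n
  induction n using Nat.strong_induction_on with
  | _ n ih =>
    intro α hα hcard
    by_cases hT : ∃ p t, S.Attaches α p t
    · obtain ⟨p, t, hatt⟩ := hT
      have hstep : S.Step α (Function.update α p (some t)) := ⟨p, t, hatt, rfl⟩
      have hβ : S.Producible (Function.update α p (some t)) := hα.tail hstep
      have hpD : p ∈ D := hmemD p (dom_mem hβ p t (by simp))
      have hsub : (D.filter (fun q => Function.update α p (some t) q = none)) ⊆
          D.filter (fun q => α q = none) := by
        intro q hq
        simp only [Finset.mem_filter] at hq ⊢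
        refine ⟨hq.1, ?_⟩
        by_contra hne
        obtain ⟨u, hu⟩ := Option.ne_none_iff_exists'.mp hne
        have := step_mono hstep hu
        rw [this] at hq
        exact absurd hq.2 (by simp)
      have hlt : (D.filter (fun q => Function.update α p (some t) q = none)).card <
          (D.filter (fun q => α q = none)).card := by
        apply Finset.card_lt_card
        rw [Finset.ssubset_iff_of_subset hsub]
        refine ⟨p, ?_, ?_⟩
        · simp only [Finset.mem_filter]; exact ⟨hpD, hatt.2.1⟩
        · simp only [Finset.mem_filter, Function.update_self]
          intro h; exact absurd h.2 (by simp)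
      exact ih _ (lt_of_lt_of_le hlt hcard) _ hβ le_rfl
    · push_neg at hT
      exact ⟨α, hα, hT⟩

end RTAS

/-- Tandem glue allocation: if a directed RTAS uniquely self-assembles `P`
using exactly one tile type `t_g`, `t_b`, `t_o` of each of the colors `g`,
`b`, `o` (with `b ≠ o`), `P` contains a `g`-position with a `b`-colored east
neighbor and a `g`-position with an `o`-colored east neighbor, and `P` contains
two vertically adjacent `b`-positions and two vertically adjacent
`o`-positions, then `t_g(E) = t_b(W) = t_o(W)`, `t_b(N) = t_b(S)`,
`t_o(N) = t_o(S)`, and `t_b(S) ≠ t_o(S)`. -/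
theorem tandem_glue_allocation (S : RTAS) (hused : S.UsesAllTiles)
    (hdir : S.IsDirected) (P : ℤ × ℤ → ℕ) (f : TileType → ℕ)
    (hP : S.UniquelySelfAssembles P f)
    (cg cb co : ℕ) (hbo : cb ≠ co)
    (tg tb tO : TileType)
    (htg : tg ∈ S.T) (hfg : f tg = cg) (hug : ∀ t ∈ S.T, f t = cg → t = tg)
    (htb : tb ∈ S.T) (hfb : f tb = cb) (hub : ∀ t ∈ S.T, f t = cb → t = tb)
    (hto : tO ∈ S.T) (hfo : f tO = co) (huo : ∀ t ∈ S.T, f t = co → t = tO)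
    (x₁ y₁ x₂ y₂ : ℤ)
    (hx₁ : 1 ≤ x₁) (hx₁' : x₁ ≤ (S.w : ℤ) - 1) (hy₁ : 1 ≤ y₁) (hy₁' : y₁ ≤ (S.h : ℤ))
    (hx₂ : 1 ≤ x₂) (hx₂' : x₂ ≤ (S.w : ℤ) - 1) (hy₂ : 1 ≤ y₂) (hy₂' : y₂ ≤ (S.h : ℤ))
    (hP₁ : P (x₁, y₁) = cg) (hP₁' : P (x₁ + 1, y₁) = cb)
    (hP₂ : P (x₂, y₂) = cg) (hP₂' : P (x₂ + 1, y₂) = co)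
    (x₃ y₃ x₄ y₄ : ℤ)
    (hx₃ : 1 ≤ x₃) (hx₃' : x₃ ≤ (S.w : ℤ)) (hy₃ : 1 ≤ y₃) (hy₃' : y₃ ≤ (S.h : ℤ) - 1)
    (hx₄ : 1 ≤ x₄) (hx₄' : x₄ ≤ (S.w : ℤ)) (hy₄ : 1 ≤ y₄) (hy₄' : y₄ ≤ (S.h : ℤ) - 1)
    (hP₃ : P (x₃, y₃) = cb) (hP₃' : P (x₃, y₃ + 1) = cb)
    (hP₄ : P (x₄, y₄) = co) (hP₄' : P (x₄, y₄ + 1) = co) :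
    tg.east = tb.west ∧ tb.west = tO.west ∧
    tb.north = tb.south ∧ tO.north = tO.south ∧
    tb.south ≠ tO.south := by
  classical
  obtain ⟨α, hterm⟩ := RTAS.exists_terminal S
  obtain ⟨hdom, hcol⟩ := hP α hterm
  have hseednone : ∀ x y : ℤ, 1 ≤ x → 1 ≤ y → S.σ (x, y) = none := by
    intro x y hx hy
    rw [← Option.not_isSome_iff_eq_none, S.seed_dom]
    rintro (⟨_, _, h3⟩ | ⟨h1, _⟩) <;> omega
  have key : ∀ x y : ℤ, 1 ≤ x → x ≤ (S.w : ℤ) → 1 ≤ y → y ≤ (S.h : ℤ) →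
      ∀ c t₀, P (x, y) = c → t₀ ∈ S.T → (∀ t ∈ S.T, f t = c → t = t₀) →
      α (x, y) = some t₀ ∧ ∃ α', S.Producible α' ∧ S.Attaches α' (x, y) t₀ ∧
        Relation.ReflTransGen S.Step (Function.update α' (x, y) (some t₀)) α := by
    intro x y hx hxw hy hyh c t₀ hPc ht₀ huniq
    have hmem : ((x, y) : ℤ × ℤ) ∈ RTAS.PatternDom S.w S.h := ⟨hx.trans' (by norm_num), hxw, hy.trans' (by norm_num), hyh⟩
    have hsome := (hdom (x, y)).mpr hmem
    obtain ⟨t, ht⟩ := Option.isSome_iff_exists.mp hsome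
    rcases RTAS.placed hterm.1 ht with hσ | ⟨α', hprod, hatt, hchain⟩
    · rw [hseednone x y hx hy] at hσ; exact absurd hσ (by simp)
    · have heq : t = t₀ := huniq t hatt.1 (by rw [hcol _ _ ht, hPc])
      subst heq
      exact ⟨ht, α', hprod, hatt, hchain⟩
  have persist : ∀ (α' : Assembly) (p q : ℤ × ℤ) (t₀ tw : TileType),
      Relation.ReflTransGen S.Step (Function.update α' p (some t₀)) α →
      q ≠ p → α' q = some tw → α q = some tw := by
    intro α' p q t₀ tw hchain hne hq
    exact RTAS.rt_mono hchain (by rw [Function.update_of_ne hne]; exact hq)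
  -- colored tiles in place
  obtain ⟨hg1, -⟩ := key x₁ y₁ hx₁ (by omega) hy₁ hy₁' cg tg hP₁ htg hug
  obtain ⟨hg2, -⟩ := key x₂ y₂ hx₂ (by omega) hy₂ hy₂' cg tg hP₂ htg hug
  obtain ⟨hb3, -⟩ := key x₃ y₃ hx₃ hx₃' hy₃ (by omega) cb tb hP₃ htb hub
  obtain ⟨ho4, -⟩ := key x₄ y₄ hx₄ hx₄' hy₄ (by omega) co tO hP₄ hto huo
  -- tg.east = tb.west
  obtain ⟨hb1, α₁, hprod₁, hatt₁, hchain₁⟩ :=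
    key (x₁ + 1) y₁ (by omega) (by omega) hy₁ hy₁' cb tb hP₁' htb hub
  obtain ⟨-, -, tw₁, ts₁, hW₁, hS₁, hE₁, hN₁⟩ := hatt₁
  have hW₁' : α₁ (x₁, y₁) = some tw₁ := by
    rw [show ((x₁ : ℤ), y₁) = ((x₁ + 1, y₁).1 - 1, (x₁ + 1, y₁).2) from by norm_num]
    exact hW₁
  have haw₁ : α (x₁, y₁) = some tw₁ := persist _ _ _ _ _ hchain₁
    (by simp only [ne_eq, Prod.mk.injEq, not_and]; intro h; omega) hW₁'
  have htw₁ : tw₁ = tg := by rw [haw₁] at hg1; exact Option.some.inj hg1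
  have hgb : tg.east = tb.west := by rw [← htw₁]; exact hE₁
  -- tg.east = tO.west
  obtain ⟨ho2, α₂, hprod₂, hatt₂, hchain₂⟩ :=
    key (x₂ + 1) y₂ (by omega) (by omega) hy₂ hy₂' co tO hP₂' hto huo
  obtain ⟨-, hnone₂, tw₂, ts₂, hW₂, hS₂, hE₂, hN₂⟩ := hatt₂
  have hW₂' : α₂ (x₂, y₂) = some tw₂ := by
    rw [show ((x₂ : ℤ), y₂) = ((x₂ + 1, y₂).1 - 1, (x₂ + 1, y₂).2) from by norm_num]
    exact hW₂
  have haw₂ : α (x₂, y₂) = some tw₂ := persist _ _ _ _ _ hchain₂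
    (by simp only [ne_eq, Prod.mk.injEq, not_and]; intro h; omega) hW₂'
  have htw₂ : tw₂ = tg := by rw [haw₂] at hg2; exact Option.some.inj hg2
  have hgo : tg.east = tO.west := by rw [← htw₂]; exact hE₂
  -- tb.north = tb.south
  obtain ⟨-, α₃, hprod₃, hatt₃, hchain₃⟩ :=
    key x₃ (y₃ + 1) hx₃ hx₃' (by omega) (by omega) cb tb hP₃' htb hub
  obtain ⟨-, -, tw₃, ts₃, hW₃, hS₃, hE₃, hN₃⟩ := hatt₃
  have hS₃' : α₃ (x₃, y₃) = some ts₃ := by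
    rw [show ((x₃ : ℤ), y₃) = ((x₃, y₃ + 1).1, (x₃, y₃ + 1).2 - 1) from by norm_num]
    exact hS₃
  have has₃ : α (x₃, y₃) = some ts₃ := persist _ _ _ _ _ hchain₃
    (by simp only [ne_eq, Prod.mk.injEq, not_and]; intro _ h; omega) hS₃'
  have hts₃ : ts₃ = tb := by rw [has₃] at hb3; exact Option.some.inj hb3
  have hbb : tb.north = tb.south := hts₃ ▸ hN₃
  -- tO.north = tO.south
  obtain ⟨-, α₄, hprod₄, hatt₄, hchain₄⟩ :=
    key x₄ (y₄ + 1) hx₄ hx₄' (by omega) (by omega) co tO hP₄' hto huo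
  obtain ⟨-, -, tw₄, ts₄, hW₄, hS₄, hE₄, hN₄⟩ := hatt₄
  have hS₄' : α₄ (x₄, y₄) = some ts₄ := by
    rw [show ((x₄ : ℤ), y₄) = ((x₄, y₄ + 1).1, (x₄, y₄ + 1).2 - 1) from by norm_num]
    exact hS₄
  have has₄ : α (x₄, y₄) = some ts₄ := persist _ _ _ _ _ hchain₄
    (by simp only [ne_eq, Prod.mk.injEq, not_and]; intro _ h; omega) hS₄'
  have hts₄ : ts₄ = tO := by rw [has₄] at ho4; exact Option.some.inj ho4
  have hoo : tO.north = tO.south := hts₄ ▸ hN₄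
  -- tb.south ≠ tO.south
  refine ⟨hgb, hgb ▸ hgo, hbb, hoo, ?_⟩
  intro hEq
  have hattb : S.Attaches α₂ (x₂ + 1, y₂) tb :=
    ⟨htb, hnone₂, tw₂, ts₂, hW₂, hS₂, by rw [hE₂, ← hgo, hgb], by rw [hN₂, ← hEq]⟩
  have hβ : S.Producible (Function.update α₂ (x₂ + 1, y₂) (some tb)) :=
    hprod₂.tail ⟨(x₂ + 1, y₂), tb, hattb, rfl⟩
  obtain ⟨γ, hαγ, hβγ⟩ := hdir α _ hterm.1 hβ
  have hγα : γ = α := RTAS.terminal_absorb hterm hαγ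
  have : α (x₂ + 1, y₂) = some tb := by
    rw [← hγα]
    exact RTAS.rt_mono hβγ (by simp)
  rw [this] at ho2
  have : tb = tO := Option.some.inj ho2
  apply hbo
  rw [← hfb, ← hfo, this]
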